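/- arXiv:0903.4539 — 9 statements merged into one kernel-verified Lean document; each statement's English description precedes it below -/
import Mathlib

section
/- (Lerch's identity) For every real number x with 0 < x ≤ 1, the derivative in s of the Hurwitz zeta function at s = 0 satisfies ζ'(0, x) = log Γ(x) − (1/2) log(2π), where Γ is the Gamma function. -/
/-!
For `Re s > 1` the terms `(n + x)^(-s) - (n + 1)^(-s) + (x - 1) s (n + 1)^(-s-1)` sum to
`ζ(s, x) - ζ(s) + (x - 1) s ζ(s + 1)`, and `s ζ(s + 1)` is entire with value `1` and derivative `γ`
at `s = 0`. Each term is the first-order Taylor remainder of `u ↦ u^(-s)` between `n + x` and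
`n + 1`, hence `O(n^(-3/2))` uniformly on a disc around `[0, 2]`; so the series is holomorphic
there, equals the right-hand side by analytic continuation, and may be differentiated termwise at
`s = 0`. This gives
`ζ'(0, x) - ζ'(0) + (x - 1) γ = ∑ (log (n + 1) - log (n + x) + (x - 1) / (n + 1))`,
and by Gauss's product formula for `Γ` the series equals `log Γ(x) + (x - 1) γ`.
Finally `ζ'(0) = -log (2π) / 2`.
-/

open Set Filter Topology

theorem norm_sub_sub_smul_le_of_hasDerivAt {E : Type*} [NormedAddCommGroup E] [NormedSpace ℝ E]
    {φ φ' φ'' : ℝ → E} {a c M : ℝ} (hac : a ≤ c)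
    (hφ : ∀ u ∈ Icc a c, HasDerivAt φ (φ' u) u) (hφ' : ∀ u ∈ Icc a c, HasDerivAt φ' (φ'' u) u)
    (hM : ∀ u ∈ Icc a c, ‖φ'' u‖ ≤ M) :
    ‖φ a - φ c - (a - c) • φ' c‖ ≤ M * (c - a) ^ 2 := by
  -- `u ↦ φ u + (a - u) • φ' u` equals `φ a` at `a` and has derivative `(a - u) • φ'' u`.
  have hderiv : ∀ u ∈ Icc a c, HasDerivWithinAt (fun u => φ u + (a - u) • φ' u)
      ((a - u) • φ'' u) (Icc a c) u := by
    intro u hu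
    have := (hφ u hu).fun_add (((hasDerivAt_id' u).const_sub a).fun_smul (hφ' u hu))
    convert this.hasDerivWithinAt using 1
    module
  have hbound : ∀ u ∈ Ico a c, ‖(a - u) • φ'' u‖ ≤ M * (c - a) := by
    intro u hu
    rw [norm_smul, Real.norm_eq_abs, abs_of_nonpos (by linarith [hu.1]), mul_comm]
    exact mul_le_mul (hM u (Ico_subset_Icc_self hu)) (by linarith [hu.2]) (by linarith [hu.1])
      ((norm_nonneg _).trans (hM u (Ico_subset_Icc_self hu)))
  have := norm_image_sub_le_of_norm_deriv_le_segment' hderiv hbound c (right_mem_Icc.2 hac)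
  have hrw : -(φ a - φ c - (a - c) • φ' c) = (φ c + (a - c) • φ' c) - (φ a + (a - a) • φ' a) := by
    module
  rwa [← norm_neg, hrw, sq, ← mul_assoc]

namespace Real

open Finset

theorem rpow_neg_le_of_nat_add_le {x p q σ u : ℝ} {n : ℕ} (hx0 : 0 < x) (hx1 : x ≤ 1)
    (hp : 0 ≤ p) (hσ : σ ∈ Set.Icc p q) (hu : n + x ≤ u) :
    u ^ (-σ) ≤ x ^ (-q) * ((n : ℝ) + 1) ^ (-p) := by
  have hxn : x * (n + 1) ≤ u := by nlinarith [(n.cast_nonneg : (0 : ℝ) ≤ n)]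
  calc u ^ (-σ) ≤ (x * (n + 1)) ^ (-σ) :=
        rpow_le_rpow_of_nonpos (by positivity) hxn (by linarith [hσ.1])
    _ = x ^ (-σ) * ((n : ℝ) + 1) ^ (-σ) := mul_rpow hx0.le (by positivity)
    _ ≤ x ^ (-q) * ((n : ℝ) + 1) ^ (-p) :=
        mul_le_mul (rpow_le_rpow_of_exponent_ge hx0 hx1 (by linarith [hσ.2]))
          (rpow_le_rpow_of_exponent_le (by simp) (by linarith [hσ.1])) (by positivity)
          (by positivity)

theorem sum_range_log_add_one (N : ℕ) :
    ∑ n ∈ range N, log ((n : ℝ) + 1) = log (N.factorial : ℝ) := by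
  rw [← log_prod (fun n _ => by positivity), ← prod_range_add_one_eq_factorial]
  push_cast
  rfl

theorem tendsto_sum_range_log_sub_log_add_div {x : ℝ} (hx : 0 < x) :
    Tendsto (fun N : ℕ => ∑ n ∈ range N, (log (n + 1) - log (n + x) + (x - 1) / (n + 1)))
      atTop (𝓝 (log (Gamma x) + (x - 1) * eulerMascheroniConstant)) := by
  have hratio : Tendsto (fun N : ℕ => log ((x + N) / N)) atTop (𝓝 0) := by
    have : Tendsto (fun N : ℕ => x / N + 1) atTop (𝓝 1) := by
      simpa using (tendsto_const_div_atTop_nhds_zero_nat x).add_const 1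
    simpa using ((continuousAt_log one_ne_zero).tendsto.comp this).congr'
      (by filter_upwards [eventually_ne_atTop 0] with N hN; simp; field_simp)
  have hlim := ((BohrMollerup.tendsto_log_gamma hx).add
    (tendsto_harmonic_sub_log.const_mul (x - 1))).add hratio
  rw [add_zero] at hlim
  refine hlim.congr' ?_
  -- the partial sum is `logGammaSeq x N + (x - 1) (H_N - log N) + log ((x + N) / N)`
  filter_upwards [eventually_ne_atTop 0] with N hN
  have hN : (0 : ℝ) < N := by positivity
  rw [BohrMollerup.logGammaSeq, log_div (by positivity) hN.ne', sum_range_succ,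
    sum_add_distrib, sum_sub_distrib, sum_range_log_add_one, harmonic]
  simp only [add_comm x, div_eq_mul_inv, ← mul_sum]
  push_cast
  ring

theorem summable_nat_add_one_rpow_neg {p : ℝ} (hp : 1 < p) :
    Summable fun n : ℕ => ((n : ℝ) + 1) ^ (-p) := by
  refine ((summable_one_div_nat_add_rpow 1 p).2 hp).congr fun n => ?_
  rw [rpow_neg (by positivity), one_div, abs_of_pos (by positivity)]

end Real

open Complex HurwitzZeta

theorem hasDerivAt_ofReal_cpow_const_of_pos {u : ℝ} (hu : 0 < u) (w : ℂ) :
    HasDerivAt (fun v : ℝ => (v : ℂ) ^ w) (w * (u : ℂ) ^ (w - 1)) u := by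
  simpa using ((hasDerivAt_id (u : ℂ)).cpow_const (c := w) (ofReal_mem_slitPlane.2 hu)).comp_ofReal

theorem hasDerivAt_ofReal_cpow_neg_zero {c : ℝ} (hc : 0 < c) :
    HasDerivAt (fun s : ℂ => (c : ℂ) ^ (-s)) (-Real.log c) 0 := by
  simpa [ofReal_log hc.le] using
    (hasDerivAt_neg (0 : ℂ)).const_cpow (c := (c : ℂ)) (Or.inl (ofReal_ne_zero.2 hc.ne'))

noncomputable def lerchTerm (x : ℝ) (n : ℕ) (s : ℂ) : ℂ :=
  ((n + x : ℝ) : ℂ) ^ (-s) - ((n + 1 : ℝ) : ℂ) ^ (-s) + (x - 1) * s * ((n + 1 : ℝ) : ℂ) ^ (-s - 1)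

theorem norm_lerchTerm_le {x : ℝ} (hx0 : 0 < x) (hx1 : x ≤ 1) (n : ℕ) {s : ℂ}
    (hs : s ∈ Metric.ball (1 : ℂ) (3 / 2)) :
    ‖lerchTerm x n s‖ ≤ 9 * x ^ (-(9 / 2) : ℝ) * ((n : ℝ) + 1) ^ (-(3 / 2) : ℝ) := by
  rw [mem_ball_iff_norm] at hs
  have hre := abs_le.1 ((abs_re_le_norm (s - 1)).trans hs.le)
  rw [sub_re, one_re] at hre
  have hs1 : ‖s‖ ≤ 5 / 2 := by
    have := norm_le_norm_add_norm_sub' s 1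
    norm_num at this
    linarith
  have hs2 : ‖-s - 1‖ ≤ 7 / 2 := by
    have := norm_add_le (s - 1) 2
    rw [← norm_neg, show -(-s - 1) = s - 1 + 2 by ring]
    norm_num at this
    linarith
  set K := x ^ (-(9 / 2) : ℝ) * ((n : ℝ) + 1) ^ (-(3 / 2) : ℝ)
  have hax : (0 : ℝ) < n + x := by positivity
  have htaylor := norm_sub_sub_smul_le_of_hasDerivAt (φ := fun v : ℝ => (v : ℂ) ^ (-s))
    (φ' := fun v : ℝ => -s * (v : ℂ) ^ (-s - 1))
    (φ'' := fun v : ℝ => -s * ((-s - 1) * (v : ℂ) ^ (-s - 1 - 1))) (M := 35 / 4 * K)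
    (a := n + x) (c := n + 1) (by linarith)
    (fun u hu => hasDerivAt_ofReal_cpow_const_of_pos (hax.trans_le hu.1) _)
    (fun u hu => (hasDerivAt_ofReal_cpow_const_of_pos (hax.trans_le hu.1) _).const_mul _)
    (fun u hu => by
      have hu0 : 0 < u := hax.trans_le hu.1
      rw [norm_mul, norm_mul, norm_neg, norm_cpow_eq_rpow_re_of_pos hu0,
        show (-s - 1 - 1).re = -(s.re + 2) by simp; ring]
      have := Real.rpow_neg_le_of_nat_add_le hx0 hx1 (p := 3 / 2) (q := 9 / 2)
        (σ := s.re + 2) (by norm_num) ⟨by linarith [hre.1], by linarith [hre.2]⟩ hu.1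
      calc ‖s‖ * (‖-s - 1‖ * u ^ (-(s.re + 2))) ≤ 5 / 2 * (7 / 2 * K) := by gcongr
        _ = 35 / 4 * K := by ring)
  have hterm : lerchTerm x n s = (fun v : ℝ => (v : ℂ) ^ (-s)) (n + x) -
      (fun v : ℝ => (v : ℂ) ^ (-s)) (n + 1) -
      ((n + x : ℝ) - (n + 1)) • (fun v : ℝ => -s * (v : ℂ) ^ (-s - 1)) (n + 1) := by
    simp only [lerchTerm, real_smul]
    push_cast
    ring
  rw [hterm]
  refine htaylor.trans ?_
  have hK : 0 ≤ K := by positivity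
  have : ((n : ℝ) + 1 - (n + x)) ^ 2 ≤ 1 := by nlinarith
  nlinarith

theorem differentiable_lerchTerm {x : ℝ} (hx0 : 0 < x) (n : ℕ) :
    Differentiable ℂ (lerchTerm x n) := by
  unfold lerchTerm
  fun_prop (disch := exact Or.inl (ofReal_ne_zero.2 (by positivity)))

theorem hasDerivAt_lerchTerm_zero {x : ℝ} (hx0 : 0 < x) (n : ℕ) :
    HasDerivAt (lerchTerm x n)
      ((Real.log (n + 1) - Real.log (n + x) + (x - 1) / (n + 1) : ℝ) : ℂ) 0 := by
  have hq : ((n + 1 : ℝ) : ℂ) ≠ 0 := ofReal_ne_zero.2 (by positivity)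
  have hlast : HasDerivAt (fun s : ℂ => (x - 1) * s * ((n + 1 : ℝ) : ℂ) ^ (-s - 1))
      ((x - 1) * ((n + 1 : ℝ) : ℂ)⁻¹) 0 := by
    refine (((hasDerivAt_id' (0 : ℂ)).const_mul ((x : ℂ) - 1)).fun_mul
      (((hasDerivAt_id' (0 : ℂ)).neg.sub_const 1).const_cpow (Or.inl hq))).congr_deriv ?_
    simp [cpow_neg_one]
  have := ((hasDerivAt_ofReal_cpow_neg_zero (by positivity : (0 : ℝ) < n + x)).fun_sub
    (hasDerivAt_ofReal_cpow_neg_zero (by positivity : (0 : ℝ) < n + 1))).fun_add hlast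
  refine this.congr_deriv ?_
  push_cast
  ring

theorem hasSum_ofReal_nat_add_cpow_neg {a : ℝ} (ha : a ∈ Icc 0 1) {s : ℂ} (hs : 1 < s.re) :
    HasSum (fun n : ℕ => ((n + a : ℝ) : ℂ) ^ (-s)) (hurwitzZeta a s) := by
  convert hasSum_hurwitzZeta_of_one_lt_re ha hs using 2 with n
  rw [cpow_neg, one_div]
  push_cast
  rfl

theorem hasSum_ofReal_nat_add_one_cpow_neg {s : ℂ} (hs : 1 < s.re) :
    HasSum (fun n : ℕ => ((n + 1 : ℝ) : ℂ) ^ (-s)) (riemannZeta s) := by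
  simpa [← hurwitzZeta_zero, AddCircle.coe_period] using
    hasSum_ofReal_nat_add_cpow_neg (a := 1) (by simp) hs

theorem hasSum_lerchTerm {x : ℝ} (hx0 : 0 < x) (hx1 : x ≤ 1) {s : ℂ} (hs : 1 < s.re) :
    HasSum (fun n => lerchTerm x n s)
      (hurwitzZeta x s - riemannZeta s + (x - 1) * riemannZeta₁ (s + 1)) := by
  have hs0 : s ≠ 0 := by rintro rfl; norm_num at hs
  have hζ₁ : (x - 1) * riemannZeta₁ (s + 1) = (x - 1) * s * riemannZeta (s + 1) := by
    rw [riemannZeta_eq_inv_sub_mul (by simpa using hs0), add_sub_cancel_right]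
    field_simp
  rw [hζ₁]
  refine ((hasSum_ofReal_nat_add_cpow_neg ⟨hx0.le, hx1⟩ hs).sub
    (hasSum_ofReal_nat_add_one_cpow_neg hs)).add ?_
  simpa [sub_eq_add_neg, add_comm] using (hasSum_ofReal_nat_add_one_cpow_neg
    (s := s + 1) (by simp; linarith)).mul_left ((x - 1) * s)

theorem hasSum_deriv_lerchTerm_zero {x : ℝ} (hx0 : 0 < x) (hx1 : x ≤ 1) :
    HasSum (fun n => deriv (lerchTerm x n) 0)
      (deriv (fun s => hurwitzZeta x s - riemannZeta s + (x - 1) * riemannZeta₁ (s + 1)) 0) := by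
  set U := Metric.ball (1 : ℂ) (3 / 2)
  have hU0 : (0 : ℂ) ∈ U := by simp [U]; norm_num
  have hU2 : (2 : ℂ) ∈ U := by simp [U, dist_eq_norm]; norm_num
  have hbound := (Real.summable_nat_add_one_rpow_neg (p := 3 / 2) (by norm_num)).mul_left
    (9 * x ^ (-(9 / 2) : ℝ))
  have hdiff : ∀ n, DifferentiableOn ℂ (lerchTerm x n) U :=
    fun n => (differentiable_lerchTerm hx0 n).differentiableOn
  have hle : ∀ n, ∀ w ∈ U, ‖lerchTerm x n w‖ ≤ _ := fun n w hw => norm_lerchTerm_le hx0 hx1 n hw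
  have hlimit : Differentiable ℂ
      fun s => hurwitzZeta x s - riemannZeta s + (x - 1) * riemannZeta₁ (s + 1) := by
    have := differentiable_hurwitzZeta_sub_hurwitzZeta x 0
    rw [hurwitzZeta_zero] at this
    exact this.fun_add
      ((differentiable_riemannZeta₁.comp (differentiable_id.add_const 1)).const_mul _)
  have heq : EqOn (fun s => ∑' n, lerchTerm x n s)
      (fun s => hurwitzZeta x s - riemannZeta s + (x - 1) * riemannZeta₁ (s + 1)) U := by
    refine AnalyticOnNhd.eqOn_of_preconnected_of_eventuallyEq
      ((differentiableOn_tsum_of_summable_norm hbound hdiff Metric.isOpen_ball hle).analyticOnNhd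
        Metric.isOpen_ball) (hlimit.differentiableOn.analyticOnNhd Metric.isOpen_ball)
      (convex_ball _ _).isPreconnected hU2 ?_
    filter_upwards [(isOpen_lt continuous_const continuous_re).mem_nhds
      (show (1 : ℝ) < (2 : ℂ).re by norm_num)] with s hs
    exact (hasSum_lerchTerm hx0 hx1 hs).tsum_eq
  rw [← (heq.eventuallyEq_of_mem (Metric.isOpen_ball.mem_nhds hU0)).deriv_eq]
  exact hasSum_deriv_of_summable_norm hbound hdiff Metric.isOpen_ball hle hU0

theorem deriv_hurwitzZeta_zero_sub_deriv_riemannZeta_zero {x : ℝ} (hx0 : 0 < x) (hx1 : x ≤ 1) :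
    deriv (hurwitzZeta x) 0 - deriv riemannZeta 0 = Real.log (Real.Gamma x) := by
  have h01 : (0 : ℂ) ≠ 1 := zero_ne_one
  have hζ₁ : HasDerivAt (fun s => riemannZeta₁ (s + 1)) Real.eulerMascheroniConstant 0 := by
    refine HasDerivAt.comp_add_const 0 1 ?_
    rw [zero_add, ← deriv_riemannZeta₁_one]
    exact (differentiable_riemannZeta₁ 1).hasDerivAt
  have hlimit := ((differentiableAt_hurwitzZeta x h01).hasDerivAt.fun_sub
    (differentiableAt_riemannZeta h01).hasDerivAt).fun_add (hζ₁.const_mul ((x : ℂ) - 1))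
  have hsum := hasSum_deriv_lerchTerm_zero hx0 hx1
  simp only [(hasDerivAt_lerchTerm_zero hx0 _).deriv, hlimit.deriv] at hsum
  have hreal := (continuous_ofReal.tendsto _).comp
    (Real.tendsto_sum_range_log_sub_log_add_div hx0)
  simp only [Function.comp_def, ofReal_sum] at hreal
  have hlim := tendsto_nhds_unique hsum.tendsto_sum_nat hreal
  push_cast at hlim
  linear_combination hlim

theorem lerch_identity (x : ℝ) (hx0 : 0 < x) (hx1 : x ≤ 1) :
    deriv (fun s => hurwitzZeta (x : UnitAddCircle) s) 0 =
      (Real.log (Real.Gamma x) : ℂ) - (1/2 : ℂ) * (Real.log (2 * Real.pi) : ℂ) := by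
  have h := deriv_hurwitzZeta_zero_sub_deriv_riemannZeta_zero hx0 hx1
  rw [deriv_riemannZeta_zero, ← ofReal_ofNat, ← ofReal_mul, ← ofReal_log (by positivity),
    ofReal_ofNat] at h
  linear_combination h
end

section
/- For every natural number q ≥ 2, the derivatives at s = 0 of the Hurwitz zeta function at rational points satisfy Σ_{r=1}^{q−1} ζ'(0, r/q) = −(1/2) log q. -/
/-!
Summing `ζ(s, j/q)` over all residues `j mod q` gives `q ^ s ζ(s)` (split `∑ n ^ (-s)` into
residue classes mod `q`); differentiating at `s = 0`, where `ζ(0) = -1/2`, gives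
`∑_{j=0}^{q-1} ζ'(0, j/q) = -(1/2) log q + ζ'(0)`, and the term `j = 0` is exactly `ζ'(0)`.
-/

open HurwitzZeta Complex Finset

namespace ZMod

variable {q : ℕ} [NeZero q]

lemma LFunction_one_eq_riemannZeta {s : ℂ} (hs : s ≠ 1) :
    LFunction (fun _ : ZMod q => (1 : ℂ)) s = riemannZeta s := by
  -- both are analytic on `{1}ᶜ` and are the same Dirichlet series for `1 < re s`
  have hL : AnalyticOnNhd ℂ (LFunction fun _ : ZMod q => (1 : ℂ)) {1}ᶜ :=
    DifferentiableOn.analyticOnNhd (fun u hu => (differentiableAt_LFunction _ u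
      (Or.inl hu)).differentiableWithinAt) isOpen_compl_singleton
  have hconv : {z : ℂ | 1 < z.re} ∈ nhds (2 : ℂ) :=
    (continuous_re.isOpen_preimage _ isOpen_Ioi).mem_nhds (by simp)
  refine hL.eqOn_of_preconnected_of_eventuallyEq analyticOn_riemannZeta
    (isConnected_compl_singleton_of_one_lt_rank (by simp) _).isPreconnected
    (by norm_num : (2 : ℂ) ∈ ({1}ᶜ : Set ℂ)) ?_ hs
  filter_upwards [hconv] with z hz
  rw [LFunction_eq_LSeries _ hz, ← LSeries_one_eq_riemannZeta hz]
  rfl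

lemma sum_hurwitzZeta_toAddCircle {s : ℂ} (hs : s ≠ 1) :
    ∑ j : ZMod q, hurwitzZeta (toAddCircle j) s = (q : ℂ) ^ s * riemannZeta s := by
  have hq : (q : ℂ) ≠ 0 := Nat.cast_ne_zero.mpr (NeZero.ne q)
  rw [← LFunction_one_eq_riemannZeta (q := q) hs, LFunction, cpow_neg, ← mul_assoc,
    mul_inv_cancel₀ (by simp [cpow_eq_zero_iff, hq]), one_mul]
  simp only [one_mul]

lemma sum_deriv_hurwitzZeta_toAddCircle_zero :
    ∑ j : ZMod q, deriv (hurwitzZeta (toAddCircle j)) 0 =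
      -(1 / 2) * log q + deriv riemannZeta 0 := by
  have hq : (q : ℂ) ≠ 0 := Nat.cast_ne_zero.mpr (NeZero.ne q)
  have hsum : (fun s => ∑ j : ZMod q, hurwitzZeta (toAddCircle j) s)
      =ᶠ[nhds 0] fun s => (q : ℂ) ^ s * riemannZeta s := by
    filter_upwards [isOpen_compl_singleton.mem_nhds (by norm_num : (0 : ℂ) ∉ ({1} : Set ℂ))]
      with s hs using sum_hurwitzZeta_toAddCircle hs
  have hprod := ((hasStrictDerivAt_const_cpow (Or.inl hq)).hasDerivAt (x := 0)).fun_mul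
    (differentiableAt_riemannZeta (by norm_num : (0 : ℂ) ≠ 1)).hasDerivAt
  rw [← deriv_fun_sum (fun j _ => differentiableAt_hurwitzZeta _ (by norm_num)),
    hsum.deriv_eq, hprod.deriv, cpow_zero, riemannZeta_zero]
  ring

lemma sum_erase_zero_toAddCircle {M : Type*} [AddCommMonoid M] (f : UnitAddCircle → M) :
    ∑ j ∈ univ.erase (0 : ZMod q), f (toAddCircle j) =
      ∑ r ∈ Ico 1 q, f ((r / q : ℝ) : UnitAddCircle) := by
  refine sum_nbij' (fun j => j.val) (fun r => r) (fun j hj => ?_) (fun r hr => ?_)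
    (fun j _ => natCast_zmod_val j) (fun r hr => val_cast_of_lt (mem_Ico.mp hr).2)
    (fun j _ => by rw [toAddCircle_apply])
  · simpa [Nat.one_le_iff_ne_zero] using ⟨(mem_erase.mp hj).1, val_lt j⟩
  · obtain ⟨hr1, hrq⟩ := mem_Ico.mp hr
    exact mem_erase.mpr ⟨mt (natCast_eq_zero_iff r q).mp (Nat.not_dvd_of_pos_of_lt hr1 hrq),
      mem_univ _⟩

end ZMod

theorem hurwitzZeta_deriv_zero_sum_general (q : ℕ) :
    ∑ r ∈ Finset.Ico 1 q,
        deriv (fun s => hurwitzZeta (((r : ℝ) / q : ℝ) : UnitAddCircle) s) 0 =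
      -(1/2 : ℂ) * (Real.log q : ℂ) := by
  rcases eq_or_ne q 0 with rfl | hq
  · simp -- `Real.log 0 = 0`
  have : NeZero q := ⟨hq⟩
  have hsplit := ZMod.sum_deriv_hurwitzZeta_toAddCircle_zero (q := q)
  rw [← add_sum_erase _ _ (mem_univ 0), map_zero, hurwitzZeta_zero,
    ZMod.sum_erase_zero_toAddCircle fun a => deriv (hurwitzZeta a) 0] at hsplit
  rw [ofReal_log q.cast_nonneg, ofReal_natCast]
  linear_combination hsplit

theorem hurwitzZeta_deriv_zero_sum (q : ℕ) (hq : 2 ≤ q) :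
    ∑ r ∈ Finset.Ico 1 q,
        deriv (fun s => hurwitzZeta (((r : ℝ) / q : ℝ) : UnitAddCircle) s) 0 =
      -(1/2 : ℂ) * (Real.log q : ℂ) :=
  hurwitzZeta_deriv_zero_sum_general q
end

section
/- (Gauss's product formula) For every natural number q ≥ 2, Σ_{r=1}^{q−1} log Γ(r/q) = ((q−1)/2) · log(2π) − (1/2) · log q; equivalently, ∏_{r=1}^{q−1} Γ(r/q) = (2π)^{(q−1)/2} / √q. -/
/-!
Euler's reflection formula pairs `Γ(r/q)` with `Γ(1 - r/q) = Γ((q-r)/q)`, so the square of the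
product is `π^(q-1) / ∏ sin(π r/q)`. Taking norms in `∏_{0<k<q} (1 - ζ^k) = q` for the primitive
root `ζ = exp(2πi/q)`, where `|1 - ζ^k| = 2 sin(π k/q)`, gives `∏ sin(π r/q) = q / 2^(q-1)`.
-/

open Finset

namespace Real

lemma norm_one_sub_exp_two_pi_I_div_pow {n k : ℕ} (hk : k ≤ n) :
    ‖1 - Complex.exp (2 * π * Complex.I / n) ^ k‖ = 2 * sin (π * k / n) := by
  have hexp : Complex.exp (2 * π * Complex.I / n) ^ k =
      Complex.exp (Complex.I * ↑(2 * π * k / n)) := by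
    rw [← Complex.exp_nat_mul]; push_cast; ring_nf
  have hsin : 0 ≤ sin (π * k / n) := by
    refine sin_nonneg_of_nonneg_of_le_pi (by positivity) ?_
    rw [mul_div_assoc]
    exact mul_le_of_le_one_right pi_pos.le
      (div_le_one_of_le₀ (by exact_mod_cast hk) (Nat.cast_nonneg n))
  rw [hexp, norm_sub_rev, Complex.norm_exp_I_mul_ofReal_sub_one,
    show 2 * π * k / n / 2 = π * k / n by ring, norm_of_nonneg (mul_nonneg zero_le_two hsin)]

theorem prod_sin_pi_mul_div {n : ℕ} (hn : n ≠ 0) :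
    ∏ k ∈ Ico 1 n, sin (π * k / n) = n / 2 ^ (n - 1) := by
  obtain ⟨m, rfl⟩ := Nat.exists_eq_add_one_of_ne_zero hn
  have hnorm := congrArg (‖·‖) (Complex.isPrimitiveRoot_exp (m + 1) hn).prod_one_sub_pow_eq_order
  simp only [norm_prod] at hnorm
  rw [prod_congr rfl fun k hk => norm_one_sub_exp_two_pi_I_div_pow (by simp at hk; omega)] at hnorm
  rw [prod_mul_distrib, prod_const, card_range, ← Nat.cast_add_one, Complex.norm_natCast] at hnorm
  rw [prod_Ico_eq_prod_range, Nat.add_sub_cancel, eq_div_iff (by positivity), mul_comm]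
  simpa only [add_comm 1] using hnorm

lemma Gamma_natCast_div_pos {r n : ℕ} (hr : 0 < r) (hn : 0 < n) : 0 < Gamma (r / n) :=
  Gamma_pos_of_pos (by positivity)

theorem prod_Gamma_div_sq {n : ℕ} (hn : n ≠ 0) :
    (∏ r ∈ Ico 1 n, Gamma (r / n)) ^ 2 = (2 * π) ^ (n - 1) / n := by
  have hreflect : ∏ r ∈ Ico 1 n, Gamma (r / n) = ∏ r ∈ Ico 1 n, Gamma (1 - r / n) := by
    have h := prod_Ico_reflect (fun j : ℕ => Gamma (j / n)) 1 (Nat.le_succ n)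
    rw [Nat.add_sub_cancel_left, Nat.add_sub_cancel] at h
    rw [← h]
    refine prod_congr rfl fun r hr => ?_
    rw [Nat.cast_sub (mem_Ico.1 hr).2.le, sub_div, div_self (by exact_mod_cast hn)]
  calc _ = ∏ r ∈ Ico 1 n, Gamma (r / n) * Gamma (1 - r / n) := by
        rw [sq, prod_mul_distrib, ← hreflect]
    _ = ∏ r ∈ Ico 1 n, π / sin (π * r / n) := by simp_rw [Gamma_mul_Gamma_one_sub, mul_div_assoc]
    _ = (2 * π) ^ (n - 1) / n := by
        rw [prod_div_distrib, prod_const, Nat.card_Ico, prod_sin_pi_mul_div hn]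
        field_simp
        ring

theorem prod_Gamma_div {n : ℕ} (hn : n ≠ 0) :
    ∏ r ∈ Ico 1 n, Gamma (r / n) = (2 * π) ^ (((n : ℝ) - 1) / 2) / √n := by
  have hpos : 0 ≤ ∏ r ∈ Ico 1 n, Gamma (r / n) :=
    prod_nonneg fun r hr => (Gamma_natCast_div_pos (mem_Ico.1 hr).1 (by omega)).le
  rw [← sqrt_sq hpos, prod_Gamma_div_sq hn, sqrt_div' _ (Nat.cast_nonneg n), sqrt_eq_rpow,
    ← rpow_natCast, ← rpow_mul (by positivity), Nat.cast_sub (by omega)]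
  ring_nf

theorem sum_log_Gamma_div {n : ℕ} (hn : n ≠ 0) :
    ∑ r ∈ Ico 1 n, log (Gamma (r / n)) = ((n : ℝ) - 1) / 2 * log (2 * π) - 1 / 2 * log n := by
  rw [← log_prod fun r hr => (Gamma_natCast_div_pos (mem_Ico.1 hr).1 (by omega)).ne',
    prod_Gamma_div hn, log_div (by positivity) (by positivity), log_rpow (by positivity),
    log_sqrt (Nat.cast_nonneg n)]
  ring

end Real

theorem gauss_product_formula (q : ℕ) (hq : 2 ≤ q) :
    (∑ r ∈ Finset.Ico 1 q, Real.log (Real.Gamma ((r : ℝ) / q)) =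
        ((q : ℝ) - 1) / 2 * Real.log (2 * Real.pi) - (1/2) * Real.log q) ∧
    (∏ r ∈ Finset.Ico 1 q, Real.Gamma ((r : ℝ) / q) =
        (2 * Real.pi) ^ (((q : ℝ) - 1) / 2) / Real.sqrt q) :=
  ⟨Real.sum_log_Gamma_div (by omega), Real.prod_Gamma_div (by omega)⟩
end

section
/- (Kubert identity for the Hurwitz zeta function) For every natural number q ≥ 1, every real number x with 0 < x ≤ 1, and every complex number s ≠ 1, q^s · ζ(s, x) = Σ_{r=0}^{q−1} ζ(s, (r + x)/q). -/
/-! For `1 < re s` the identity holds termwise: `q ^ s / (n + x) ^ s = 1 / ((n + x) / q) ^ s`, and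
splitting `n = q * m + r` along residue classes turns `(n + x) / q` into `m + (r + x) / q`, so the
`r`-th class sums to `ζ(s, (r + x) / q)`. Both sides are holomorphic on `ℂ \ {1}`, which is
connected, so the identity extends by analytic continuation. -/

open HurwitzZeta Complex Set

theorem HasSum.eq_sum_residue_classes {α : Type*} [AddCommMonoid α] [TopologicalSpace α]
    [ContinuousAdd α] [T3Space α] {q : ℕ} [NeZero q] {f : ℕ → α} {a : α} {b : Fin q → α}
    (hf : HasSum f a)
    (hb : ∀ r : Fin q, HasSum (fun m ↦ f (q * m + r)) (b r)) :
    a = ∑ r, b r := by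
  have hdivMod : HasSum (fun p : ℕ × Fin q ↦ f (q * p.1 + p.2)) a := by
    simpa [Function.comp_def, Nat.divModEquiv, mul_comm] using
      (Nat.divModEquiv q).symm.hasSum_iff.mpr hf
  have hmodDiv := (Equiv.prodComm (Fin q) ℕ).hasSum_iff.mpr hdivMod
  exact (hmodDiv.prod_fiberwise hb).unique (hasSum_fintype b)

lemma hasSum_one_div_cpow_div_hurwitzZeta {a : ℝ} (ha : a ∈ Icc 0 1) {q : ℝ} (hq : 0 ≤ q)
    {s : ℂ} (hs : 1 < re s) :
    HasSum (fun n : ℕ ↦ 1 / (((n + a) / q : ℝ) : ℂ) ^ s) ((q : ℂ) ^ s * hurwitzZeta a s) := by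
  refine ((hasSum_hurwitzZeta_of_one_lt_re ha hs).mul_left _).congr_fun fun n ↦ ?_
  have hna : 0 ≤ (n : ℝ) + a := add_nonneg n.cast_nonneg ha.1
  rw [ofReal_div, div_cpow_ofReal_nonneg hna hq, one_div_div, mul_one_div]
  push_cast
  rfl

lemma hasSum_one_div_cpow_residue_class {x : ℝ} (hx : x ∈ Icc 0 1) {q r : ℕ} (hrq : r < q)
    {s : ℂ} (hs : 1 < re s) :
    HasSum (fun m : ℕ ↦ 1 / (((((q * m + r : ℕ) : ℝ) + x) / q : ℝ) : ℂ) ^ s)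
      (hurwitzZeta (((r + x) / q : ℝ) : UnitAddCircle) s) := by
  have hq : (0 : ℝ) < q := by exact_mod_cast (Nat.zero_le r).trans_lt hrq
  have hmem : (r + x) / q ∈ Icc (0 : ℝ) 1 := by
    have : (r : ℝ) + 1 ≤ q := by exact_mod_cast hrq
    refine ⟨div_nonneg (add_nonneg r.cast_nonneg hx.1) hq.le, ?_⟩
    rw [div_le_one hq]
    linarith [hx.2]
  refine (hasSum_hurwitzZeta_of_one_lt_re hmem hs).congr_fun fun m ↦ ?_
  have hq' : (q : ℂ) ≠ 0 := by exact_mod_cast hq.ne'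
  congr 3
  push_cast
  field_simp
  ring

theorem hurwitzZeta_kubert_of_one_lt_re {q : ℕ} [NeZero q] {x : ℝ} (hx : x ∈ Icc 0 1) {s : ℂ}
    (hs : 1 < re s) :
    (q : ℂ) ^ s * hurwitzZeta (x : UnitAddCircle) s =
      ∑ r ∈ Finset.range q, hurwitzZeta ((((r : ℝ) + x) / q : ℝ) : UnitAddCircle) s := by
  rw [Finset.sum_range fun r ↦ hurwitzZeta ((((r : ℝ) + x) / q : ℝ) : UnitAddCircle) s]
  have h := hasSum_one_div_cpow_div_hurwitzZeta hx (Nat.cast_nonneg q) hs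
  rw [ofReal_natCast] at h
  exact h.eq_sum_residue_classes fun r ↦ hasSum_one_div_cpow_residue_class hx r.2 hs

theorem eqOn_compl_one_of_eq_of_one_lt_re {E : Type*} [NormedAddCommGroup E] [NormedSpace ℂ E]
    [CompleteSpace E] {f g : ℂ → E} (hf : DifferentiableOn ℂ f {1}ᶜ)
    (hg : DifferentiableOn ℂ g {1}ᶜ) (hfg : ∀ s : ℂ, 1 < re s → f s = g s) :
    EqOn f g {1}ᶜ := by
  have hU : IsPreconnected ({1}ᶜ : Set ℂ) :=
    (isConnected_compl_singleton_of_one_lt_rank (by simp) _).isPreconnected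
  have hV : {s : ℂ | 1 < re s} ∈ nhds (2 : ℂ) :=
    (continuous_re.isOpen_preimage _ isOpen_Ioi).mem_nhds (by simp)
  exact (hf.analyticOnNhd isOpen_compl_singleton).eqOn_of_preconnected_of_eventuallyEq
    (hg.analyticOnNhd isOpen_compl_singleton) hU (by norm_num)
    (Filter.eventually_of_mem hV hfg)

theorem hurwitzZeta_kubert (q : ℕ) (hq : 1 ≤ q) (x : ℝ) (hx0 : 0 < x) (hx1 : x ≤ 1)
    (s : ℂ) (hs : s ≠ 1) :
    (q : ℂ) ^ s * hurwitzZeta (x : UnitAddCircle) s =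
      ∑ r ∈ Finset.range q,
        hurwitzZeta ((((r : ℝ) + x) / q : ℝ) : UnitAddCircle) s := by
  have : NeZero q := ⟨by omega⟩
  refine eqOn_compl_one_of_eq_of_one_lt_re (fun z hz ↦ ?_) (fun z hz ↦ ?_)
    (fun z hz ↦ hurwitzZeta_kubert_of_one_lt_re ⟨hx0.le, hx1⟩ hz) hs
  · exact ((differentiableAt_id.const_cpow (.inl (NeZero.ne _))).mul
      (differentiableAt_hurwitzZeta _ hz)).differentiableWithinAt
  · exact (DifferentiableAt.fun_sum fun r _ ↦
      differentiableAt_hurwitzZeta _ hz).differentiableWithinAt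
end

section
/- (Gauss's multiplication theorem for the Gamma function) For every natural number q ≥ 1 and every real number x > 0, (2π)^{(q−1)/2} · q^{1/2 − x} · Γ(x) = ∏_{r=0}^{q−1} Γ((r + x)/q). -/
/-!
Bohr–Mollerup: `(2π)^((1-q)/2) q^(x-1/2) ∏_{r<q} Γ((r+x)/q)` is positive and log-convex on
`x > 0`, and satisfies `f (x+1) = x f x` because shifting `x` by one cycles the arguments
`(r+x)/q`, only the last of them, `x/q`, being replaced by `x/q + 1`. Its value at `1` is fixed by
the reflection formula, which pairs `Γ(k/q)` with `Γ(1-k/q)`, together with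
`∏_{0<k<q} 2 sin(πk/q) = q`, the modulus of `∏_{0<k<q} (1 - ζ^k) = q` for `ζ = e^{2πi/q}`.
-/

open Real Finset

theorem ConvexOn.sum {𝕜 E β ι : Type*} [Semiring 𝕜] [PartialOrder 𝕜] [AddCommMonoid E]
    [AddCommMonoid β] [PartialOrder β] [IsOrderedAddMonoid β] [SMul 𝕜 E] [Module 𝕜 β]
    [PosSMulMono 𝕜 β] {s : Set E} (hs : Convex 𝕜 s) (t : Finset ι) {f : ι → E → β}
    (hf : ∀ i ∈ t, ConvexOn 𝕜 s (f i)) : ConvexOn 𝕜 s fun x => ∑ i ∈ t, f i x := by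
  classical
  induction t using Finset.induction_on with
  | empty => simpa using convexOn_const 0 hs
  | insert i t hi ih =>
    simp only [sum_insert hi]
    exact (hf i (mem_insert_self i t)).add (ih fun j hj => hf j (mem_insert_of_mem hj))

namespace Real

theorem convexOn_log_Gamma_mul_add {a b : ℝ} (ha : 0 < a) (hb : 0 ≤ b) :
    ConvexOn ℝ (Set.Ioi 0) fun x => log (Gamma (a * x + b)) := by
  refine ⟨convex_Ioi 0, fun x (hx : 0 < x) y (hy : 0 < y) s t hs ht hst => ?_⟩
  have harg : a * (s • x + t • y) + b = s • (a * x + b) + t • (a * y + b) := by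
    simp only [smul_eq_mul]
    linear_combination (-b) * hst
  dsimp only
  rw [harg]
  exact convexOn_log_Gamma.2 (by positivity : 0 < a * x + b) (by positivity : 0 < a * y + b)
    hs ht hst

theorem prod_two_sin_pi_mul_div (n : ℕ) :
    ∏ k ∈ range n, 2 * sin (π * (k + 1) / (n + 1)) = n + 1 := by
  have hμ : IsPrimitiveRoot (Complex.exp (2 * π * Complex.I / (n + 1 : ℕ))) (n + 1) :=
    Complex.isPrimitiveRoot_exp _ n.succ_ne_zero
  have h := congrArg (‖·‖) hμ.prod_one_sub_pow_eq_order
  rw [norm_prod] at h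
  convert h using 1
  · refine prod_congr rfl fun k hk => ?_
    have hk : (k : ℝ) + 1 ≤ n := by exact_mod_cast mem_range.mp hk
    have hpos : 0 < sin (π * (k + 1) / (n + 1)) := by
      apply sin_pos_of_pos_of_lt_pi (by positivity)
      rw [mul_div_assoc]
      apply mul_lt_of_lt_one_right pi_pos
      rw [div_lt_one (by positivity)]; linarith
    rw [norm_sub_rev, ← Complex.exp_nat_mul,
      show ((k + 1 : ℕ) : ℂ) * (2 * π * Complex.I / (n + 1 : ℕ))
        = Complex.I * ((2 * (π * (k + 1) / (n + 1)) : ℝ) : ℂ) by push_cast; ring,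
      Complex.norm_exp_I_mul_ofReal_sub_one, mul_div_cancel_left₀ _ two_ne_zero,
      Real.norm_of_nonneg (by positivity)]
  · exact_mod_cast (Complex.norm_natCast (n + 1)).symm

theorem sq_prod_Gamma_add_one_div (n : ℕ) :
    (∏ k ∈ range (n + 1), Gamma ((k + 1) / (n + 1))) ^ 2 = (2 * π) ^ n / (n + 1) := by
  have hreflect : ∏ k ∈ range n, Gamma ((k + 1) / (n + 1))
      = ∏ k ∈ range n, Gamma (1 - (k + 1) / (n + 1)) := by
    rw [← prod_range_reflect]
    refine prod_congr rfl fun k hk => ?_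
    have hk : k + 1 ≤ n := mem_range.mp hk
    rw [Nat.sub_sub, add_comm 1, Nat.cast_sub hk]
    congr 1
    push_cast
    field_simp
    ring
  calc (∏ k ∈ range (n + 1), Gamma ((k + 1) / (n + 1))) ^ 2
      = ∏ k ∈ range n, Gamma ((k + 1) / (n + 1)) * Gamma (1 - (k + 1) / (n + 1)) := by
        rw [prod_range_succ, div_self (by positivity), Gamma_one, mul_one, sq]
        nth_rewrite 2 [hreflect]
        exact prod_mul_distrib.symm
    _ = ∏ k ∈ range n, 2 * π / (2 * sin (π * (k + 1) / (n + 1))) := by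
        refine prod_congr rfl fun k _ => ?_
        rw [Gamma_mul_Gamma_one_sub, mul_div_mul_left _ _ two_ne_zero, mul_div_assoc]
    _ = (2 * π) ^ n / (n + 1) := by
        rw [prod_div_distrib, prod_two_sin_pi_mul_div, prod_const, card_range]

noncomputable def multiplicationGamma (q : ℕ) (x : ℝ) : ℝ :=
  (2 * π) ^ ((1 - q : ℝ) / 2) * q ^ (x - 1 / 2) * ∏ r ∈ range q, Gamma ((r + x) / q)

variable {q : ℕ}

theorem multiplicationGamma_pos (hq : 0 < q) {x : ℝ} (hx : 0 < x) :
    0 < multiplicationGamma q x := by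
  have hq' : (0 : ℝ) < q := by exact_mod_cast hq
  exact mul_pos (by positivity) (prod_pos fun r _ => Gamma_pos_of_pos (by positivity))

theorem multiplicationGamma_add_one (hq : 0 < q) {x : ℝ} (hx : 0 < x) :
    multiplicationGamma q (x + 1) = x * multiplicationGamma q x := by
  have hq' : (0 : ℝ) < q := by exact_mod_cast hq
  have hshift : ∏ r ∈ range q, Gamma ((r + (x + 1)) / q)
      = x / q * ∏ r ∈ range q, Gamma ((r + x) / q) := by
    have h := (prod_range_succ' (fun r : ℕ => Gamma ((r + x) / q)) q).symm.trans
      (prod_range_succ _ q)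
    have hlast : Gamma ((q + x) / q) = x / q * Gamma (x / q) := by
      rw [← Gamma_add_one (by positivity), add_div, div_self hq'.ne', add_comm]
    simp only [Nat.cast_add, Nat.cast_one, Nat.cast_zero, zero_add, hlast] at h
    refine mul_right_cancel₀ (Gamma_pos_of_pos (by positivity : 0 < x / q)).ne' ?_
    simp only [add_right_comm _ x, ← add_assoc, h]
    ring
  rw [multiplicationGamma, multiplicationGamma, hshift, add_sub_right_comm, rpow_add_one hq'.ne']
  field_simp

theorem multiplicationGamma_one (hq : 0 < q) : multiplicationGamma q 1 = 1 := by
  obtain ⟨n, rfl⟩ := Nat.exists_eq_add_one_of_ne_zero hq.ne'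
  have hP := sq_prod_Gamma_add_one_div n
  have hpos := multiplicationGamma_pos hq one_pos
  rw [multiplicationGamma] at hpos ⊢
  push_cast at hpos ⊢
  refine (pow_left_inj₀ hpos.le zero_le_one two_ne_zero).mp ?_
  rw [mul_pow, mul_pow, hP, ← rpow_natCast, ← rpow_natCast, ← rpow_mul (by positivity),
    ← rpow_mul (by positivity), show (1 - ((n : ℝ) + 1)) / 2 * (2 : ℕ) = -n by push_cast; ring,
    show (1 - 1 / 2 : ℝ) * (2 : ℕ) = 1 by norm_num, rpow_neg (by positivity), rpow_natCast,
    rpow_one, one_pow]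
  field_simp

theorem multiplicationGamma_log_convex_Ioi (hq : 0 < q) :
    ConvexOn ℝ (Set.Ioi 0) (log ∘ multiplicationGamma q) := by
  have hq' : (0 : ℝ) < q := by exact_mod_cast hq
  have hlogq : 0 ≤ log q := log_nonneg (by exact_mod_cast hq)
  refine ((((convexOn_id (convex_Ioi 0)).smul hlogq).add_const
    ((1 - q) / 2 * log (2 * π) - log q / 2)).add
    (ConvexOn.sum (convex_Ioi 0) (range q) fun r _ =>
      convexOn_log_Gamma_mul_add (inv_pos.mpr hq') (by positivity : (0 : ℝ) ≤ r / q))).congr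
    fun x (hx : 0 < x) => ?_
  have hprod : ∀ r ∈ range q, Gamma ((r + x) / q) ≠ 0 :=
    fun r _ => (Gamma_pos_of_pos (by positivity)).ne'
  simp only [Pi.add_apply, smul_eq_mul, id, Function.comp_apply, multiplicationGamma]
  symm
  rw [log_mul (by positivity) (prod_ne_zero_iff.mpr hprod), log_mul (by positivity)
    (by positivity), log_prod hprod, log_rpow (by positivity), log_rpow hq',
    sum_congr rfl fun r _ => by rw [add_div, add_comm, div_eq_inv_mul (x : ℝ)]]
  ring

theorem multiplicationGamma_eq_Gamma (hq : 0 < q) {x : ℝ} (hx : 0 < x) :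
    multiplicationGamma q x = Gamma x :=
  eq_Gamma_of_log_convex (multiplicationGamma_log_convex_Ioi hq)
    (multiplicationGamma_add_one hq) (multiplicationGamma_pos hq) (multiplicationGamma_one hq) hx

end Real

theorem gauss_multiplication (q : ℕ) (hq : 1 ≤ q) (x : ℝ) (hx : 0 < x) :
    (2 * Real.pi) ^ (((q : ℝ) - 1) / 2) * (q : ℝ) ^ ((1 : ℝ) / 2 - x) * Real.Gamma x =
      ∏ r ∈ Finset.range q, Real.Gamma (((r : ℝ) + x) / q) := by
  have hq' : (0 : ℝ) < q := by exact_mod_cast hq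
  have h2π : (0 : ℝ) < 2 * π := by positivity
  have hA : (2 * π) ^ (((q : ℝ) - 1) / 2) * (2 * π) ^ ((1 - q : ℝ) / 2) = 1 := by
    rw [← rpow_add h2π, show ((q : ℝ) - 1) / 2 + (1 - q) / 2 = 0 by ring, rpow_zero]
  have hB : (q : ℝ) ^ ((1 : ℝ) / 2 - x) * (q : ℝ) ^ (x - 1 / 2) = 1 := by
    rw [← rpow_add hq', show (1 : ℝ) / 2 - x + (x - 1 / 2) = 0 by ring, rpow_zero]
  rw [← multiplicationGamma_eq_Gamma hq hx, multiplicationGamma]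
  linear_combination ((q : ℝ) ^ ((1 : ℝ) / 2 - x) * (q : ℝ) ^ (x - 1 / 2) *
    ∏ r ∈ range q, Gamma ((r + x) / q)) * hA + (∏ r ∈ range q, Gamma ((r + x) / q)) * hB
end

section
/- (Multiplication formula for Bernoulli polynomials) For every natural number n, every natural number q ≥ 1, and every rational (or real) number x, B_n(q·x) = q^{n−1} · Σ_{r=0}^{q−1} B_n(x + r/q), where B_n denotes the n-th Bernoulli polynomial. -/
open Polynomial Finset

namespace BernoulliMul

variable (q : ℕ)

/-- The difference polynomial `q·Bₙ(qX) - qⁿ·∑ᵣ Bₙ(X + r/q)`. -/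
noncomputable def D (n : ℕ) : ℚ[X] :=
  C (q : ℚ) * (Polynomial.bernoulli n).comp (C (q : ℚ) * X) -
    C ((q : ℚ) ^ n) * ∑ r ∈ Finset.range q,
      (Polynomial.bernoulli n).comp (X + C ((r : ℚ) / q))

lemma D_eval (n : ℕ) (x : ℚ) :
    (D q n).eval x = (q : ℚ) * (Polynomial.bernoulli n).eval ((q : ℚ) * x) -
      (q : ℚ) ^ n * ∑ r ∈ Finset.range q,
        (Polynomial.bernoulli n).eval (x + (r : ℚ) / q) := by
  simp [D, eval_finset_sum]

lemma D_periodic (n : ℕ) (hq : 1 ≤ q) (x : ℚ) :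
    (D q n).eval (x + 1 / q) = (D q n).eval x := by
  have hq0 : (q : ℚ) ≠ 0 := by positivity
  rw [D_eval, D_eval]
  have h1 : (q : ℚ) * (x + 1 / q) = 1 + (q : ℚ) * x := by
    rw [mul_add, mul_one_div, div_self hq0]; ring
  rw [h1, bernoulli_eval_one_add]
  set f : ℕ → ℚ := fun r : ℕ => (Polynomial.bernoulli n).eval (x + (r : ℚ) / q) with hf
  have h2 : ∑ r ∈ Finset.range q,
      (Polynomial.bernoulli n).eval (x + 1 / q + (r : ℚ) / q) =
      ∑ r ∈ Finset.range q, f (r + 1) := by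
    apply Finset.sum_congr rfl
    intro r _
    simp only [hf]
    congr 1
    push_cast
    ring
  have A := Finset.sum_range_succ' f q
  have B := Finset.sum_range_succ f q
  have hf0 : f 0 = (Polynomial.bernoulli n).eval x := by simp [hf]
  have hfq : f q = (Polynomial.bernoulli n).eval x + (n : ℚ) * x ^ (n - 1) := by
    simp only [hf]
    rw [div_self hq0, show x + 1 = 1 + x from add_comm x 1, bernoulli_eval_one_add]
  have key : (q : ℚ) * ((n : ℚ) * ((q : ℚ) * x) ^ (n - 1)) =
      (q : ℚ) ^ n * ((n : ℚ) * x ^ (n - 1)) := by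
    cases n with
    | zero => simp
    | succ m =>
      simp only [Nat.add_sub_cancel]
      rw [mul_pow, pow_succ]
      ring
  linear_combination key - (q : ℚ) ^ n * h2 + (q : ℚ) ^ n * A - (q : ℚ) ^ n * B +
    (q : ℚ) ^ n * hf0 - (q : ℚ) ^ n * hfq

lemma D_const (n : ℕ) (hq : 1 ≤ q) : D q n = C ((D q n).eval 0) := by
  have hq0 : (q : ℚ) ≠ 0 := by positivity
  have key : ∀ k : ℕ, (D q n).eval ((k : ℚ) / q) = (D q n).eval 0 := by
    intro k
    induction k with
    | zero => simp
    | succ k ih =>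
      have : ((k + 1 : ℕ) : ℚ) / q = (k : ℚ) / q + 1 / q := by push_cast; ring
      rw [this, D_periodic q n hq, ih]
  have hroots : Set.Infinite {x | IsRoot (D q n - C ((D q n).eval 0)) x} := by
    apply Set.infinite_of_injective_forall_mem
      (f := fun k : ℕ => (k : ℚ) / q)
    · intro a b hab
      simp only at hab
      field_simp at hab
      exact_mod_cast hab
    · intro k
      simp only [Set.mem_setOf_eq, IsRoot, eval_sub, eval_C, key k, sub_self]
  have h0 := eq_zero_of_infinite_isRoot _ hroots
  exact sub_eq_zero.mp h0

lemma D_deriv (n : ℕ) :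
    derivative (D q (n + 1)) = C ((n + 1 : ℚ) * q) * D q n := by
  have hb : derivative (Polynomial.bernoulli (n + 1)) =
      C ((n : ℚ) + 1) * Polynomial.bernoulli n := by
    rw [derivative_bernoulli_add_one]
    congr 1
    rw [show ((n : ℚ) + 1) = ((n + 1 : ℕ) : ℚ) by push_cast; ring, C_eq_natCast]
    push_cast
    ring
  have comp1 : derivative ((Polynomial.bernoulli (n + 1)).comp (C (q : ℚ) * X)) =
      C ((q : ℚ) * ((n : ℚ) + 1)) * (Polynomial.bernoulli n).comp (C (q : ℚ) * X) := by
    rw [derivative_comp, hb, mul_comp, C_comp, derivative_mul, derivative_C, derivative_X,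
      zero_mul, mul_one, zero_add, ← mul_assoc, ← C_mul]
  have comp2 : ∀ a : ℚ, derivative ((Polynomial.bernoulli (n + 1)).comp (X + C a)) =
      C ((n : ℚ) + 1) * (Polynomial.bernoulli n).comp (X + C a) := by
    intro a
    rw [derivative_comp, hb, mul_comp, C_comp, derivative_add, derivative_X, derivative_C,
      add_zero, one_mul]
  simp only [D, derivative_sub, derivative_mul, derivative_C, zero_mul, zero_add,
    derivative_sum, comp1, comp2]
  rw [← Finset.mul_sum, mul_sub]
  congr 1
  · rw [← mul_assoc, ← mul_assoc, ← C_mul, ← C_mul]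
    congr 1
    ring
  · rw [← mul_assoc, ← mul_assoc, ← C_mul, ← C_mul]
    congr 1
    ring

lemma D_zero (n : ℕ) (hq : 1 ≤ q) : D q n = 0 := by
  have hq0 : (q : ℚ) ≠ 0 := by positivity
  obtain hc := D_const q n hq
  set c := (D q n).eval 0 with hcdef
  have hder : derivative (D q (n + 1) - C ((n + 1 : ℚ) * q * c) * X) = 0 := by
    rw [derivative_sub, D_deriv, hc, derivative_mul, derivative_C, derivative_X]
    simp [← C_mul]
  have hdeg := Polynomial.natDegree_eq_zero_of_derivative_eq_zero hder
  have heq := Polynomial.eq_C_of_natDegree_eq_zero hdeg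
  have h01 : (D q (n + 1) - C ((n + 1 : ℚ) * q * c) * X).eval 1 =
      (D q (n + 1) - C ((n + 1 : ℚ) * q * c) * X).eval 0 := by
    rw [heq]; simp
  simp only [eval_sub, eval_mul, eval_C, eval_X, mul_one, mul_zero, sub_zero] at h01
  have hval : (D q (n + 1)).eval 1 = (D q (n + 1)).eval 0 := by
    rw [D_eval, D_eval]
    have e1 : (Polynomial.bernoulli (n + 1)).eval ((q : ℚ) * 1) =
        _root_.bernoulli (n + 1) + ((n : ℚ) + 1) * ∑ k ∈ Finset.range q, (k : ℚ) ^ n := by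
      rw [mul_one]
      exact Polynomial.bernoulli_succ_eval q n
    have e0 : (Polynomial.bernoulli (n + 1)).eval ((q : ℚ) * 0) =
        _root_.bernoulli (n + 1) := by
      rw [mul_zero, Polynomial.bernoulli_eval_zero]
    have e2 : ∀ r ∈ Finset.range q,
        (Polynomial.bernoulli (n + 1)).eval (1 + (r : ℚ) / q) =
          (Polynomial.bernoulli (n + 1)).eval (0 + (r : ℚ) / q) +
            ((n : ℚ) + 1) * ((r : ℚ) / q) ^ n := by
      intro r _
      rw [bernoulli_eval_one_add]
      simp only [Nat.add_sub_cancel, Nat.cast_add, Nat.cast_one, zero_add]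
    have e3 : (q : ℚ) ^ (n + 1) * ∑ r ∈ Finset.range q,
        ((n : ℚ) + 1) * ((r : ℚ) / q) ^ n =
        (q : ℚ) * (((n : ℚ) + 1) * ∑ r ∈ Finset.range q, (r : ℚ) ^ n) := by
      rw [Finset.mul_sum, Finset.mul_sum, Finset.mul_sum]
      apply Finset.sum_congr rfl
      intro r _
      rw [div_pow]
      field_simp
      ring
    rw [e1, e0, Finset.sum_congr rfl e2, Finset.sum_add_distrib]
    linear_combination -e3
  have hc0 : ((n : ℚ) + 1) * q * c = 0 := by linarith [h01, hval]
  have hn : ((n : ℚ) + 1) * q ≠ 0 := by positivity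
  have hcz : c = 0 := by
    rcases mul_eq_zero.1 hc0 with h | h
    · exact absurd h hn
    · exact h
  rw [hc, hcz, map_zero]

end BernoulliMul

theorem bernoulli_multiplication (n : ℕ) (q : ℕ) (hq : 1 ≤ q) (x : ℚ) :
    (Polynomial.bernoulli n).eval ((q : ℚ) * x) =
      (q : ℚ) ^ ((n : ℤ) - 1) *
        ∑ r ∈ Finset.range q, (Polynomial.bernoulli n).eval (x + (r : ℚ) / q) := by
  have hq0 : (q : ℚ) ≠ 0 := by positivity
  have h := BernoulliMul.D_zero q n hq
  have h2 := BernoulliMul.D_eval q n x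
  rw [h, Polynomial.eval_zero] at h2
  have hz : (q : ℚ) ^ ((n : ℤ) - 1) = (q : ℚ) ^ n / q := by
    rw [zpow_sub₀ hq0, zpow_one, zpow_natCast]
  rw [hz, div_mul_eq_mul_div, eq_div_iff hq0]
  linear_combination -h2
end

section
/- (Multiplication formula for the digamma function) For every natural number q ≥ 1 and every real number x > 0, ψ(x) = log q + (1/q) · Σ_{r=0}^{q−1} ψ((r + x)/q), where ψ is the digamma function. -/
/-!
Both sides satisfy the recurrence `f (x + 1) = f x + 1 / x`: for the right-hand side the shift
`x ↦ x + 1` permutes the arguments `(r + x) / q` cyclically except for the last one, which becomes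
`x / q + 1`. So their difference is `1`-periodic on `(0, ∞)`. Convexity of `log ∘ Γ`, whose slope on
`[x, x + 1]` is `log x`, gives `log x - 1 / x ≤ ψ x ≤ log x`, hence both sides are `log x + o(1)`,
and a periodic function with limit `0` at infinity vanishes.
-/

open Filter Topology

/-- The digamma function, the logarithmic derivative of the real Gamma function. -/
noncomputable def digamma (x : ℝ) : ℝ := deriv (fun t => Real.log (Real.Gamma t)) x

noncomputable def digammaMultiplicationSum (q : ℕ) (x : ℝ) : ℝ :=
  Real.log q + (1 / q) * ∑ r ∈ Finset.range q, digamma (((r : ℝ) + x) / q)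

theorem eq_of_tendsto_of_add_one_eq {f : ℝ → ℝ} {c x : ℝ} (hf : ∀ t, 0 < t → f (t + 1) = f t)
    (hlim : Tendsto f atTop (𝓝 c)) (hx : 0 < x) : f x = c := by
  have hshift : ∀ n : ℕ, f (x + n) = f x := by
    intro n
    induction n with
    | zero => simp
    | succ n ih => rw [Nat.cast_succ, ← add_assoc, hf _ (by positivity), ih]
  have hseq : Tendsto (fun n : ℕ => f (x + n)) atTop (𝓝 c) :=
    hlim.comp (tendsto_atTop_add_const_left _ _ tendsto_natCast_atTop_atTop)
  simp only [hshift] at hseq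
  exact tendsto_nhds_unique tendsto_const_nhds hseq

lemma digamma_eq_deriv_comp (x : ℝ) : digamma x = deriv (Real.log ∘ Real.Gamma) x := rfl

lemma differentiableAt_log_comp_Gamma {x : ℝ} (hx : 0 < x) :
    DifferentiableAt ℝ (Real.log ∘ Real.Gamma) x := by
  have hx' : ∀ m : ℕ, x ≠ -m := fun m => ((neg_nonpos.mpr m.cast_nonneg).trans_lt hx).ne'
  exact (Real.differentiableAt_Gamma hx').log (Real.Gamma_ne_zero hx')

lemma log_Gamma_add_one {x : ℝ} (hx : 0 < x) :
    Real.log (Real.Gamma (x + 1)) = Real.log (Real.Gamma x) + Real.log x := by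
  rw [Real.Gamma_add_one hx.ne', Real.log_mul hx.ne' (Real.Gamma_pos_of_pos hx).ne', add_comm]

lemma digamma_add_one {x : ℝ} (hx : 0 < x) : digamma (x + 1) = digamma x + x⁻¹ := by
  rw [digamma_eq_deriv_comp, digamma_eq_deriv_comp, ← deriv_comp_add_const, ← Real.deriv_log,
    ← deriv_add (differentiableAt_log_comp_Gamma hx) (Real.differentiableAt_log hx.ne')]
  refine Filter.EventuallyEq.deriv_eq ?_
  filter_upwards [eventually_gt_nhds hx] with t ht using log_Gamma_add_one ht

lemma slope_log_comp_Gamma {x : ℝ} (hx : 0 < x) :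
    slope (Real.log ∘ Real.Gamma) x (x + 1) = Real.log x := by
  rw [slope_def_field, add_sub_cancel_left, div_one, Function.comp_apply, Function.comp_apply,
    log_Gamma_add_one hx, add_sub_cancel_left]

lemma digamma_le_log {x : ℝ} (hx : 0 < x) : digamma x ≤ Real.log x := by
  rw [digamma_eq_deriv_comp, ← slope_log_comp_Gamma hx]
  exact Real.convexOn_log_Gamma.deriv_le_slope hx (by positivity : 0 < x + 1) (lt_add_one x)
    (differentiableAt_log_comp_Gamma hx)

lemma log_sub_inv_le_digamma {x : ℝ} (hx : 0 < x) : Real.log x - x⁻¹ ≤ digamma x := by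
  have hslope : Real.log x ≤ digamma (x + 1) := by
    rw [digamma_eq_deriv_comp, ← slope_log_comp_Gamma hx]
    exact Real.convexOn_log_Gamma.slope_le_deriv hx (by positivity : 0 < x + 1) (lt_add_one x)
      (differentiableAt_log_comp_Gamma (by positivity))
  rw [digamma_add_one hx] at hslope
  linarith

lemma tendsto_digamma_sub_log : Tendsto (fun t => digamma t - Real.log t) atTop (𝓝 0) := by
  refine tendsto_of_tendsto_of_tendsto_of_le_of_le' (g := fun t => -t⁻¹) (h := fun _ => 0)
    (by simpa using (tendsto_inv_atTop_zero (𝕜 := ℝ)).neg) tendsto_const_nhds ?_ ?_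
  · filter_upwards [eventually_gt_atTop 0] with t ht
    linarith [log_sub_inv_le_digamma ht]
  · filter_upwards [eventually_gt_atTop 0] with t ht
    linarith [digamma_le_log ht]

lemma tendsto_digamma_add_sub_log (a : ℝ) :
    Tendsto (fun t => digamma (t + a) - Real.log t) atTop (𝓝 0) := by
  have hshift := tendsto_digamma_sub_log.comp (tendsto_atTop_add_const_right _ a tendsto_id)
  simpa using hshift.add (Real.tendsto_log_comp_add_sub_log a)

lemma digammaMultiplicationSum_add_one {q : ℕ} (hq : q ≠ 0) {x : ℝ} (hx : 0 < x) :
    digammaMultiplicationSum q (x + 1) = digammaMultiplicationSum q x + x⁻¹ := by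
  set g : ℕ → ℝ := fun r => digamma (((r : ℝ) + x) / q)
  have hshift : ∑ r ∈ Finset.range q, digamma (((r : ℝ) + (x + 1)) / q)
      = ∑ r ∈ Finset.range q, g (r + 1) := by
    refine Finset.sum_congr rfl fun r _ => ?_
    simp only [g, Nat.cast_succ, add_right_comm, add_assoc]
  have hlast : g q = g 0 + q / x := by
    have : ((q : ℝ) + x) / q = x / q + 1 := by field_simp; ring
    simp only [g, this, Nat.cast_zero, zero_add, digamma_add_one (by positivity : 0 < x / q),
      inv_div]
  have htelescope := (Finset.sum_range_succ' g q).symm.trans (Finset.sum_range_succ g q)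
  unfold digammaMultiplicationSum
  rw [hshift, eq_sub_of_add_eq htelescope, hlast]
  field_simp
  ring

lemma tendsto_digammaMultiplicationSum_sub_log {q : ℕ} (hq : q ≠ 0) :
    Tendsto (fun t => digammaMultiplicationSum q t - Real.log t) atTop (𝓝 0) := by
  have hq' : (0 : ℝ) < q := Nat.cast_pos.mpr (Nat.pos_of_ne_zero hq)
  have hterm : ∀ r ∈ Finset.range q,
      Tendsto (fun t => digamma (t / q + r / q) - Real.log (t / q)) atTop (𝓝 0) :=
    fun r _ => (tendsto_digamma_add_sub_log _).comp (tendsto_id.atTop_div_const hq')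
  have hmean := (tendsto_finsetSum _ hterm).const_mul (1 / (q : ℝ))
  rw [Finset.sum_const_zero, mul_zero] at hmean
  refine hmean.congr' ?_
  filter_upwards [eventually_gt_atTop 0] with t ht
  simp only [Finset.sum_sub_distrib, Finset.sum_const, Finset.card_range, nsmul_eq_mul,
    Real.log_div ht.ne' hq'.ne', digammaMultiplicationSum, ← add_div, add_comm (t : ℝ)]
  field_simp
  ring

theorem digamma_multiplication (q : ℕ) (hq : 1 ≤ q) (x : ℝ) (hx : 0 < x) :
    digamma x = Real.log q + (1 / q) * ∑ r ∈ Finset.range q, digamma (((r : ℝ) + x) / q) := by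
  have hq0 : q ≠ 0 := Nat.one_le_iff_ne_zero.mp hq
  have hdiff : digamma x - digammaMultiplicationSum q x = 0 := by
    refine eq_of_tendsto_of_add_one_eq (f := fun t => digamma t - digammaMultiplicationSum q t)
      (fun t ht => ?_) ?_ hx
    · simp only [digamma_add_one ht, digammaMultiplicationSum_add_one hq0 ht]
      ring
    · simpa using tendsto_digamma_sub_log.sub (tendsto_digammaMultiplicationSum_sub_log hq0)
  exact sub_eq_zero.mp hdiff
end

section
/- For every real number x with 0 < x < 1/2, the derivatives at s = −1 of the Hurwitz zeta function satisfy ζ'(−1, x) = (1/2) · ζ'(−1, 2x) − (1/4) · (4x² − 2x + 1/6) · log 2 − ζ'(−1, x + 1/2). -/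
/-!
Splitting `∑ₙ (n + 2x)⁻ˢ` into even and odd `n` gives `ζ(s, x) + ζ(s, x + 1/2) = 2ˢ ζ(s, 2x)`
for `Re s > 1`. Both sides are holomorphic on the connected set `ℂ ∖ {1}`, so the identity holds
there; differentiating it at `s = -1` and inserting `ζ(-1, a) = -B₂(a)/2` gives the claim.
-/

open HurwitzZeta Complex Set Filter Topology

lemma hurwitzZeta_neg_one {x : ℝ} (hx : x ∈ Icc 0 1) :
    hurwitzZeta x (-1) = -((x : ℂ) ^ 2 - x + 1 / 6) / 2 := by
  have h := hurwitzZeta_neg_nat (k := 1) one_ne_zero hx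
  rw [Nat.cast_one] at h
  rw [h]
  simp [Polynomial.bernoulli, Finset.sum_range_succ, bernoulli, bernoulli'_two]
  ring

lemma one_div_two_mul_cpow {a : ℝ} (ha : 0 ≤ a) (s : ℂ) :
    1 / ((2 * a : ℝ) : ℂ) ^ s = 2 ^ (-s) * (1 / (a : ℂ) ^ s) := by
  rw [ofReal_mul, mul_cpow_ofReal_nonneg zero_le_two ha, cpow_neg]
  push_cast
  ring

lemma hurwitzZeta_add_hurwitzZeta_add_half_of_one_lt_re {x : ℝ} (hx : x ∈ Icc 0 (1 / 2))
    {s : ℂ} (hs : 1 < s.re) :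
    hurwitzZeta x s + hurwitzZeta (x + 1 / 2 : ℝ) s = 2 ^ s * hurwitzZeta (2 * x : ℝ) s := by
  obtain ⟨hx0, hx1⟩ := hx
  have hsum (a : ℝ) (ha : a ∈ Icc 0 1) := hasSum_hurwitzZeta_of_one_lt_re ha hs
  have heven : HasSum (fun k : ℕ ↦ 1 / ((2 * k : ℕ) + (2 * x : ℝ) : ℂ) ^ s)
      (2 ^ (-s) * hurwitzZeta x s) := by
    refine ((hsum x ⟨hx0, by linarith⟩).mul_left (2 ^ (-s))).congr_fun fun k ↦ ?_
    have h := one_div_two_mul_cpow (a := k + x) (by positivity) s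
    push_cast at h ⊢
    rw [← h]
    ring_nf
  have hodd : HasSum (fun k : ℕ ↦ 1 / ((2 * k + 1 : ℕ) + (2 * x : ℝ) : ℂ) ^ s)
      (2 ^ (-s) * hurwitzZeta (x + 1 / 2 : ℝ) s) := by
    refine ((hsum (x + 1 / 2) ⟨by linarith, by linarith⟩).mul_left (2 ^ (-s))).congr_fun
      fun k ↦ ?_
    have h := one_div_two_mul_cpow (a := k + (x + 1 / 2)) (by positivity) s
    push_cast at h ⊢
    rw [← h]
    ring_nf
  have h := (HasSum.even_add_odd (f := fun n : ℕ ↦ 1 / ((n : ℂ) + (2 * x : ℝ)) ^ s) heven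
    hodd).unique (hsum (2 * x) ⟨by linarith, by linarith⟩)
  rw [← mul_add] at h
  rw [← h, ← mul_assoc, ← cpow_add _ _ two_ne_zero, add_neg_cancel, cpow_zero, one_mul]

lemma hurwitzZeta_add_hurwitzZeta_add_half {x : ℝ} (hx : x ∈ Icc 0 (1 / 2)) {s : ℂ}
    (hs : s ≠ 1) :
    hurwitzZeta x s + hurwitzZeta (x + 1 / 2 : ℝ) s = 2 ^ s * hurwitzZeta (2 * x : ℝ) s := by
  have hU : IsOpen {(1 : ℂ)}ᶜ := isOpen_compl_singleton
  have hlhs : AnalyticOnNhd ℂ (fun s ↦ hurwitzZeta x s + hurwitzZeta (x + 1 / 2 : ℝ) s)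
      {1}ᶜ :=
    DifferentiableOn.analyticOnNhd (fun u hu ↦ ((differentiableAt_hurwitzZeta _ hu).add
      (differentiableAt_hurwitzZeta _ hu)).differentiableWithinAt) hU
  have hrhs : AnalyticOnNhd ℂ (fun s ↦ 2 ^ s * hurwitzZeta (2 * x : ℝ) s) {1}ᶜ :=
    DifferentiableOn.analyticOnNhd (fun u hu ↦ ((differentiableAt_id.const_cpow
      (Or.inl two_ne_zero)).mul (differentiableAt_hurwitzZeta _ hu)).differentiableWithinAt) hU
  have hconn : IsPreconnected ({1}ᶜ : Set ℂ) :=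
    (isConnected_compl_singleton_of_one_lt_rank (by simp) _).isPreconnected
  have hnear_two : {s : ℂ | 1 < s.re} ∈ 𝓝 (2 : ℂ) :=
    (isOpen_lt continuous_const continuous_re).mem_nhds (by norm_num)
  refine hlhs.eqOn_of_preconnected_of_eventuallyEq hrhs hconn (z₀ := 2) (by norm_num) ?_ hs
  filter_upwards [hnear_two] with s hs
  exact hurwitzZeta_add_hurwitzZeta_add_half_of_one_lt_re hx hs

lemma deriv_hurwitzZeta_add_deriv_hurwitzZeta_add_half {x : ℝ} (hx : x ∈ Icc 0 (1 / 2))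
    {s : ℂ} (hs : s ≠ 1) :
    deriv (fun s ↦ hurwitzZeta x s) s + deriv (fun s ↦ hurwitzZeta (x + 1 / 2 : ℝ) s) s =
      2 ^ s * log 2 * hurwitzZeta (2 * x : ℝ) s +
        2 ^ s * deriv (fun s ↦ hurwitzZeta (2 * x : ℝ) s) s := by
  have hdup : (fun s ↦ hurwitzZeta x s + hurwitzZeta (x + 1 / 2 : ℝ) s) =ᶠ[𝓝 s]
      fun s ↦ 2 ^ s * hurwitzZeta (2 * x : ℝ) s :=
    eventually_of_mem (isOpen_compl_singleton.mem_nhds hs) fun u hu ↦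
      hurwitzZeta_add_hurwitzZeta_add_half hx hu
  rw [← deriv_fun_add (differentiableAt_hurwitzZeta _ hs) (differentiableAt_hurwitzZeta _ hs),
    hdup.deriv_eq]
  exact ((hasStrictDerivAt_const_cpow (Or.inl two_ne_zero)).hasDerivAt.mul
    (differentiableAt_hurwitzZeta _ hs).hasDerivAt).deriv

theorem hurwitzZeta_deriv_neg_one_duplication (x : ℝ) (hx0 : 0 < x) (hx : x < 1/2) :
    deriv (fun s => hurwitzZeta (x : UnitAddCircle) s) (-1) =
      (1/2 : ℂ) * deriv (fun s => hurwitzZeta ((2 * x : ℝ) : UnitAddCircle) s) (-1)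
        - (1/4 : ℂ) * (4 * (x : ℂ) ^ 2 - 2 * (x : ℂ) + 1/6) * (Real.log 2 : ℂ)
        - deriv (fun s => hurwitzZeta ((x + 1/2 : ℝ) : UnitAddCircle) s) (-1) := by
  have hdup := deriv_hurwitzZeta_add_deriv_hurwitzZeta_add_half ⟨hx0.le, hx.le⟩
    (by norm_num : (-1 : ℂ) ≠ 1)
  have hlog : log 2 = (Real.log 2 : ℂ) := by simp
  rw [hurwitzZeta_neg_one ⟨by linarith, by linarith⟩, cpow_neg_one, hlog] at hdup
  push_cast at hdup
  linear_combination hdup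
end

section
/- For every natural number q ≥ 2, the digamma function satisfies Σ_{r=1}^{q−1} ψ(r/q) = −(q − 1)·γ − q · log q, where γ is the Euler–Mascheroni constant. -/
open Real Set Topology

lemma differentiableAt_Gamma_of_pos {x : ℝ} (hx : 0 < x) : DifferentiableAt ℝ Gamma x :=
  differentiableAt_Gamma fun m => ((neg_nonpos.mpr m.cast_nonneg).trans_lt hx).ne'

lemma hasDerivAt_log_Gamma {x : ℝ} (hx : 0 < x) :
    HasDerivAt (fun t => log (Gamma t)) (digamma x) x :=
  ((differentiableAt_Gamma_of_pos hx).log (Gamma_pos_of_pos hx).ne').hasDerivAt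

lemma digamma_one : digamma 1 = -eulerMascheroniConstant := by
  rw [digamma, deriv.log (differentiableAt_Gamma_of_pos one_pos) (by simp), Gamma_one, div_one,
    eulerMascheroniConstant_eq_neg_deriv, neg_neg]

lemma ConvexOn.fun_sum {𝕜 E β ι : Type*} [Semiring 𝕜] [PartialOrder 𝕜]
    [AddCommMonoid E] [AddCommMonoid β] [PartialOrder β] [IsOrderedAddMonoid β]
    [SMul 𝕜 E] [Module 𝕜 β] {t : Set E} (ht : Convex 𝕜 t) {s : Finset ι}
    {f : ι → E → β} (hf : ∀ i ∈ s, ConvexOn 𝕜 t (f i)) :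
    ConvexOn 𝕜 t (fun x => ∑ i ∈ s, f i x) := by
  simpa only [Finset.sum_fn] using Finset.sum_induction f (ConvexOn 𝕜 t)
    (fun _ _ => ConvexOn.add) (convexOn_const (0 : β) ht) hf

lemma sub_eq_log_Gamma_of_convexOn {f : ℝ → ℝ} (hf_conv : ConvexOn ℝ (Ioi 0) f)
    (hf_feq : ∀ {y : ℝ}, 0 < y → f (y + 1) = f y + log y) {x : ℝ} (hx : 0 < x) :
    f x - f 1 = log (Gamma x) :=
  tendsto_nhds_unique (BohrMollerup.tendsto_logGammaSeq hf_conv hf_feq hx)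
    (BohrMollerup.tendsto_log_gamma hx)

lemma convexOn_log_Gamma_add_div {a b : ℝ} (ha : 0 < a) (hb : 0 ≤ b) :
    ConvexOn ℝ (Ioi 0) (fun s => log (Gamma ((s + b) / a))) := by
  let g : ℝ →ᵃ[ℝ] ℝ := (a⁻¹ • LinearMap.id).toAffineMap + AffineMap.const ℝ ℝ (b / a)
  refine (convexOn_log_Gamma.comp_affineMap g).subset (fun s (hs : 0 < s) => ?_)
    (convex_Ioi 0) |>.congr fun s _ => ?_
  · change 0 < a⁻¹ * s + b / a
    positivity
  · change log (Gamma (a⁻¹ * s + b / a)) = _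
    rw [add_div, inv_mul_eq_div]

noncomputable def logGaussProd (q : ℕ) (s : ℝ) : ℝ :=
  s * log q + ∑ r ∈ Finset.range q, log (Gamma ((s + r) / q))

lemma convexOn_logGaussProd {q : ℕ} (hq : 0 < q) : ConvexOn ℝ (Ioi 0) (logGaussProd q) := by
  have hlin : ConvexOn ℝ (Ioi 0) (fun s : ℝ => s * log q) := by
    simpa only [smul_eq_mul, mul_comm, id] using
      (convexOn_id (convex_Ioi (0 : ℝ))).smul (log_natCast_nonneg q)
  exact hlin.add <| ConvexOn.fun_sum (convex_Ioi 0) fun r _ =>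
    convexOn_log_Gamma_add_div (Nat.cast_pos.mpr hq) r.cast_nonneg

lemma logGaussProd_add_one {q : ℕ} (hq : 0 < q) {y : ℝ} (hy : 0 < y) :
    logGaussProd q (y + 1) = logGaussProd q y + log y := by
  have hq' : (0 : ℝ) < q := Nat.cast_pos.mpr hq
  set h : ℕ → ℝ := fun r => log (Gamma ((y + r) / q)) with h_def
  have h_shift : ∑ r ∈ Finset.range q, log (Gamma ((y + 1 + r) / q)) =
      ∑ r ∈ Finset.range q, h (r + 1) :=
    Finset.sum_congr rfl fun r _ => by
      simp only [h_def, Nat.cast_add_one, add_right_comm, add_assoc]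
  have h_top : h q = log y - log q + h 0 := by
    have hyq : 0 < y / q := div_pos hy hq'
    simp only [h_def, CharP.cast_eq_zero, add_zero]
    rw [add_div, div_self hq'.ne', Gamma_add_one hyq.ne',
      log_mul hyq.ne' (Gamma_pos_of_pos hyq).ne', log_div hy.ne' hq'.ne']
  have h_telescope := Finset.sum_range_sub h q
  rw [Finset.sum_sub_distrib] at h_telescope
  rw [logGaussProd, logGaussProd, h_shift]
  linarith

lemma log_Gamma_eq_logGaussProd_sub {q : ℕ} (hq : 0 < q) {s : ℝ} (hs : 0 < s) :
    log (Gamma s) = logGaussProd q s - logGaussProd q 1 :=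
  (sub_eq_log_Gamma_of_convexOn (convexOn_logGaussProd hq) (logGaussProd_add_one hq) hs).symm

lemma hasDerivAt_logGaussProd {q : ℕ} (hq : 0 < q) {s : ℝ} (hs : 0 < s) :
    HasDerivAt (logGaussProd q)
      (log q + (∑ r ∈ Finset.range q, digamma ((s + r) / q)) / q) s := by
  have hq' : (0 : ℝ) < q := Nat.cast_pos.mpr hq
  have h_lin : HasDerivAt (fun t => t * log q) (log q) s := by
    simpa using (hasDerivAt_id s).mul_const (log q)
  have h_term (r : ℕ) :
      HasDerivAt (fun t => log (Gamma ((t + r) / q))) (digamma ((s + r) / q) / q) s := by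
    simpa only [Function.comp_def, id, one_mul, div_eq_mul_inv] using
      (hasDerivAt_log_Gamma (by positivity)).comp s
        (((hasDerivAt_id s).add_const (r : ℝ)).div_const q)
  rw [Finset.sum_div]
  exact h_lin.add (HasDerivAt.fun_sum fun r _ => h_term r)

lemma digamma_eq_log_add_sum_digamma {q : ℕ} (hq : 0 < q) {s : ℝ} (hs : 0 < s) :
    digamma s = log q + (∑ r ∈ Finset.range q, digamma ((s + r) / q)) / q := by
  have h_eq : (fun t => log (Gamma t)) =ᶠ[𝓝 s] fun t => logGaussProd q t - logGaussProd q 1 :=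
    Filter.eventually_of_mem (Ioi_mem_nhds hs) fun t ht => log_Gamma_eq_logGaussProd_sub hq ht
  rw [digamma, h_eq.deriv_eq, ((hasDerivAt_logGaussProd hq hs).sub_const _).deriv]

theorem digamma_sum_rationals (q : ℕ) (hq : 2 ≤ q) :
    ∑ r ∈ Finset.Ico 1 q, digamma ((r : ℝ) / q) =
      -((q : ℝ) - 1) * Real.eulerMascheroniConstant - q * Real.log q := by
  have hq' : (0 : ℝ) < q := by positivity
  have h_reindex : ∑ r ∈ Finset.range q, digamma ((1 + r) / q) =
      ∑ r ∈ Finset.Ico 1 q, digamma ((r : ℝ) / q) + digamma 1 := by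
    have h_top := Finset.sum_Ico_succ_top (by omega : 1 ≤ q) fun r => digamma (r / q)
    rw [Finset.sum_Ico_eq_sum_range, Nat.add_sub_cancel, div_self hq'.ne'] at h_top
    push_cast at h_top
    exact h_top
  have h := digamma_eq_log_add_sum_digamma (by omega : 0 < q) one_pos
  rw [h_reindex, digamma_one] at h
  field_simp at h
  linarith
end
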